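/- arXiv:2603.13614 — 9 statements merged into one kernel-verified Lean document; each statement's English description precedes it below -/
import Mathlib

section
/- Let C : [0,1]² → [0,1] be a bivariate copula (in particular, its survival copula C̄(u,v) := u + v − 1 + C(1−u, 1−v) satisfies 0 ≤ C̄(x,y) ≤ min(x,y) for all (x,y) ∈ [0,1]²). Suppose that for every v ∈ [0,1] the limit Λ(v,1) := lim_{s→∞} s·C̄(v/s, 1/s) exists. Then lim_{t↑1} [3 / (t²(1−t)³)] ∫_t¹ ( C(u,t) − u·t )² du = 3 ∫₀¹ Λ(v,1)² dv. -/
/-!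
The substitution `u = 1 - (1 - t) w` rewrites the pre-limit quotient as
`3 / t² · ∫₀¹ D_s(w)² dw` with `s = (1 - t)⁻¹`, where `D_s(w) = s · C̄(w/s, 1/s) − w/s`
tends to `Λ(w,1)` as `s → ∞`. Since `0 ≤ C̄(x, y) ≤ y`, we have `|D_s| ≤ 1` for `s ≥ 1`, so
dominated convergence gives the limit.
-/

open Filter Set

noncomputable section

/-- A bivariate copula: grounded, with uniform margins, and 2-increasing. -/
def IsCopula (C : ℝ → ℝ → ℝ) : Prop :=
  (∀ u ∈ Icc (0 : ℝ) 1, C u 0 = 0 ∧ C 0 u = 0 ∧ C u 1 = u ∧ C 1 u = u) ∧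
  (∀ u₁ u₂ v₁ v₂ : ℝ, 0 ≤ u₁ → u₁ ≤ u₂ → u₂ ≤ 1 → 0 ≤ v₁ → v₁ ≤ v₂ → v₂ ≤ 1 →
    0 ≤ C u₂ v₂ - C u₁ v₂ - C u₂ v₁ + C u₁ v₁)

/-- Survival copula `C̄(u,v) = u + v − 1 + C(1−u,1−v)`. -/
def survCopula (C : ℝ → ℝ → ℝ) : ℝ → ℝ → ℝ := fun u v => u + v - 1 + C (1 - u) (1 - v)

/-- `s · (C̄ − Π)(w/s, 1/s)`, the deviation of the survival copula from independence at
scale `1/s`. -/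
def tailDeviation (C : ℝ → ℝ → ℝ) (s w : ℝ) : ℝ :=
  s * survCopula C (w / s) (1 / s) - w / s

theorem tendsto_tailDeviation {C : ℝ → ℝ → ℝ} {w ℓ : ℝ}
    (h : Tendsto (fun s : ℝ => s * survCopula C (w / s) (1 / s)) atTop (nhds ℓ)) :
    Tendsto (fun s => tailDeviation C s w) atTop (nhds ℓ) := by
  have := h.sub ((tendsto_const_nhds (x := w)).div_atTop tendsto_id)
  rwa [sub_zero] at this

theorem integral_sq_sub_mul_eq_tailDeviation {C : ℝ → ℝ → ℝ} {t : ℝ} (ht : t < 1) :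
    ∫ u in t..1, (C u t - u * t) ^ 2 =
      (1 - t) ^ 3 * ∫ w in (0 : ℝ)..1, tailDeviation C (1 - t)⁻¹ w ^ 2 := by
  have h1t : (1 - t) ≠ 0 := by linarith
  have hpt : ∀ w, tailDeviation C (1 - t)⁻¹ w ^ 2 =
      ((1 - t)⁻¹) ^ 2 * (C (1 - (1 - t) * w) t - (1 - (1 - t) * w) * t) ^ 2 := by
    intro w
    simp only [tailDeviation, survCopula, div_inv_eq_mul, one_mul, sub_sub_cancel]
    rw [mul_comm w]
    field_simp
    ring
  simp_rw [hpt, intervalIntegral.integral_const_mul]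
  rw [intervalIntegral.integral_comp_sub_mul (fun u => (C u t - u * t) ^ 2) h1t]
  simp only [mul_one, mul_zero, sub_zero, sub_sub_cancel, smul_eq_mul]
  rw [← mul_assoc, ← mul_assoc, show (1 - t) ^ 3 * (1 - t)⁻¹ ^ 2 * (1 - t)⁻¹ = 1 by field_simp,
    one_mul]

namespace IsCopula

variable {C : ℝ → ℝ → ℝ}

theorem lipschitzOnWith_left (hC : IsCopula C) {v : ℝ} (hv : v ∈ Icc (0 : ℝ) 1) :
    LipschitzOnWith 1 (fun a => C a v) (Icc (0 : ℝ) 1) := by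
  have key : ∀ a ∈ Icc (0 : ℝ) 1, ∀ b ∈ Icc (0 : ℝ) 1, a ≤ b → |C b v - C a v| ≤ b - a := by
    intro a ha b hb hab
    have hmono := hC.2 a b 0 v ha.1 hab hb.2 le_rfl hv.1 hv.2
    have hlip := hC.2 a b v 1 ha.1 hab hb.2 hv.1 hv.2 le_rfl
    have ma := hC.1 a ha
    have mb := hC.1 b hb
    rw [abs_le]
    constructor <;> linarith
  refine LipschitzOnWith.of_dist_le_mul fun a ha b hb => ?_
  rw [Real.dist_eq, Real.dist_eq, NNReal.coe_one, one_mul]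
  rcases le_total a b with hab | hba
  · rw [abs_sub_comm, abs_sub_comm a, abs_of_nonneg (sub_nonneg.2 hab)]
    exact key a ha b hb hab
  · rw [abs_of_nonneg (sub_nonneg.2 hba)]
    exact key b hb a ha hba

theorem survCopula_nonneg (hC : IsCopula C) {x y : ℝ} (hx : x ∈ Icc (0 : ℝ) 1)
    (hy : y ∈ Icc (0 : ℝ) 1) : 0 ≤ survCopula C x y := by
  have := hC.2 (1 - x) 1 (1 - y) 1 (by linarith [hx.2]) (by linarith [hx.1]) le_rfl
    (by linarith [hy.2]) (by linarith [hy.1]) le_rfl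
  have h1 := (hC.1 1 ⟨zero_le_one, le_rfl⟩).2.2.1
  have hx1 := (hC.1 (1 - x) ⟨by linarith [hx.2], by linarith [hx.1]⟩).2.2.1
  have hy1 := (hC.1 (1 - y) ⟨by linarith [hy.2], by linarith [hy.1]⟩).2.2.2
  simp only [survCopula]
  linarith

theorem survCopula_le_right (hC : IsCopula C) {x y : ℝ} (hx : x ∈ Icc (0 : ℝ) 1)
    (hy : y ∈ Icc (0 : ℝ) 1) : survCopula C x y ≤ y := by
  have := hC.2 0 (1 - x) (1 - y) 1 le_rfl (by linarith [hx.2]) (by linarith [hx.1])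
    (by linarith [hy.2]) (by linarith [hy.1]) le_rfl
  have h0 := (hC.1 1 ⟨zero_le_one, le_rfl⟩).2.1
  have hx1 := (hC.1 (1 - x) ⟨by linarith [hx.2], by linarith [hx.1]⟩).2.2.1
  have hy0 := (hC.1 (1 - y) ⟨by linarith [hy.2], by linarith [hy.1]⟩).2.1
  simp only [survCopula]
  linarith

theorem abs_tailDeviation_le_one (hC : IsCopula C) {s w : ℝ} (hs : 1 ≤ s)
    (hw : w ∈ Icc (0 : ℝ) 1) : |tailDeviation C s w| ≤ 1 := by
  have hs0 : 0 < s := by linarith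
  have hws : w / s ∈ Icc (0 : ℝ) 1 :=
    ⟨div_nonneg hw.1 hs0.le, div_le_one_of_le₀ (hw.2.trans hs) hs0.le⟩
  have hs1 : 1 / s ∈ Icc (0 : ℝ) 1 := ⟨by positivity, div_le_one_of_le₀ hs hs0.le⟩
  have hlo : 0 ≤ s * survCopula C (w / s) (1 / s) :=
    mul_nonneg hs0.le (hC.survCopula_nonneg hws hs1)
  have hhi : s * survCopula C (w / s) (1 / s) ≤ 1 := by
    calc s * survCopula C (w / s) (1 / s) ≤ s * (1 / s) :=
          mul_le_mul_of_nonneg_left (hC.survCopula_le_right hws hs1) hs0.le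
      _ = 1 := by field_simp
  rw [tailDeviation, abs_le]
  constructor <;> linarith [hws.1, hws.2]

theorem continuousOn_tailDeviation (hC : IsCopula C) {s : ℝ} (hs : 1 ≤ s) :
    ContinuousOn (tailDeviation C s) (Icc (0 : ℝ) 1) := by
  have hs0 : 0 < s := by linarith
  have hs1 : 1 - 1 / s ∈ Icc (0 : ℝ) 1 :=
    ⟨sub_nonneg.2 (div_le_one_of_le₀ hs hs0.le), by linarith [one_div_pos.2 hs0]⟩
  have hmaps : MapsTo (fun w : ℝ => 1 - w / s) (Icc (0 : ℝ) 1) (Icc (0 : ℝ) 1) :=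
    fun w hw => ⟨sub_nonneg.2 (div_le_one_of_le₀ (hw.2.trans hs) hs0.le),
      by linarith [div_nonneg hw.1 hs0.le]⟩
  have hC' : ContinuousOn (fun w => C (1 - w / s) (1 - 1 / s)) (Icc (0 : ℝ) 1) :=
    (hC.lipschitzOnWith_left hs1).continuousOn.comp (by fun_prop) hmaps
  unfold tailDeviation survCopula
  exact (continuousOn_const.mul
    ((by fun_prop : ContinuousOn (fun w : ℝ => w / s + 1 / s - 1) _).add hC')).sub (by fun_prop)

theorem tendsto_integral_tailDeviation_sq (hC : IsCopula C) {L : ℝ → ℝ}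
    (hL : ∀ v ∈ Icc (0 : ℝ) 1,
      Tendsto (fun s : ℝ => s * survCopula C (v / s) (1 / s)) atTop (nhds (L v))) :
    Tendsto (fun s => ∫ w in (0 : ℝ)..1, tailDeviation C s w ^ 2) atTop
      (nhds (∫ v in (0 : ℝ)..1, L v ^ 2)) := by
  have hIoc : uIoc (0 : ℝ) 1 ⊆ Icc 0 1 := by
    rw [uIoc_of_le zero_le_one]
    exact Ioc_subset_Icc_self
  refine intervalIntegral.tendsto_integral_filter_of_dominated_convergence (fun _ => 1) ?_ ?_
    intervalIntegrable_const ?_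
  · filter_upwards [eventually_ge_atTop 1] with s hs
    exact (((hC.continuousOn_tailDeviation hs).pow 2).mono hIoc).aestronglyMeasurable
      measurableSet_uIoc
  · filter_upwards [eventually_ge_atTop 1] with s hs
    refine MeasureTheory.ae_of_all _ fun w hw => ?_
    rw [norm_pow, Real.norm_eq_abs]
    exact pow_le_one₀ (abs_nonneg _) (hC.abs_tailDeviation_le_one hs (hIoc hw))
  · exact MeasureTheory.ae_of_all _ fun w hw =>
      (tendsto_tailDeviation (hL w (hIoc hw))).pow 2

end IsCopula

theorem tendsto_one_sub_inv_nhdsLT_one :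
    Tendsto (fun t : ℝ => (1 - t)⁻¹) (nhdsWithin 1 (Iio 1)) atTop := by
  refine tendsto_inv_nhdsGT_zero.comp
    (tendsto_nhdsWithin_of_tendsto_nhds_of_eventually_within _ ?_ ?_)
  · exact tendsto_nhdsWithin_of_tendsto_nhds
      ((continuous_const.sub continuous_id).tendsto' 1 0 (sub_self 1))
  · filter_upwards [self_mem_nhdsWithin] with t ht
    exact sub_pos.2 (mem_Iio.1 ht)

/-- **Identification of the population ETA measure.**
If `C` is a copula and the section `v ↦ Λ(v,1) = lim_{s→∞} s·C̄(v/s, 1/s)` of the upper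
tail copula exists, then the pre-limit ETA quotient
`[3/(t²(1−t)³)] ∫_t¹ (C(u,t) − ut)² du` converges, as `t ↑ 1`, to `3∫₀¹ Λ(v,1)² dv`. -/
theorem preLimitETA_tendsto (C : ℝ → ℝ → ℝ) (hC : IsCopula C) (L : ℝ → ℝ)
    (hL : ∀ v ∈ Icc (0 : ℝ) 1,
      Tendsto (fun s : ℝ => s * survCopula C (v / s) (1 / s)) atTop (nhds (L v))) :
    Tendsto
      (fun t : ℝ => 3 / (t ^ 2 * (1 - t) ^ 3) * ∫ u in t..1, (C u t - u * t) ^ 2)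
      (nhdsWithin 1 (Iio 1)) (nhds (3 * ∫ v in (0:ℝ)..1, (L v) ^ 2)) := by
  have hfactor : Tendsto (fun t : ℝ => 3 / t ^ 2) (nhdsWithin 1 (Iio 1)) (nhds 3) := by
    have : ContinuousAt (fun t : ℝ => 3 / t ^ 2) 1 := by fun_prop (disch := norm_num)
    simpa using this.tendsto.mono_left nhdsWithin_le_nhds
  refine (hfactor.mul ((hC.tendsto_integral_tailDeviation_sq hL).comp
    tendsto_one_sub_inv_nhdsLT_one)).congr' ?_
  filter_upwards [self_mem_nhdsWithin] with t ht
  rw [Function.comp_apply, integral_sq_sub_mul_eq_tailDeviation ht, ← mul_assoc, ← div_div,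
    div_mul_cancel₀ _ (pow_ne_zero 3 (sub_pos.2 (mem_Iio.1 ht)).ne')]
end
end

section
/- Let C* : [0,1]² → [0,1] be a copula, so that in particular |C*(u,v) − C*(u′,v′)| ≤ |u − u′| + |v − v′| for all (u,v),(u′,v′) ∈ [0,1]². Fix α, β ∈ [0,1] and define the Khoudraji-type copula C_{α,β}(u,v) := u^{1−α} v^{1−β} C*(u^α, v^β). Fix (u,v) ∈ [0,1]² and suppose the limit Λ_{C*}(αu, βv) := lim_{t→∞} t·C̄*(αu/t, βv/t) exists, where C̄*(x,y) := x + y − 1 + C*(1−x, 1−y). Then lim_{t→∞} t·C̄_{α,β}(u/t, v/t) = Λ_{C*}(αu, βv), where C̄_{α,β}(x,y) := x + y − 1 + C_{α,β}(1−x, 1−y). In other words, the upper tail copula of C_{α,β} satisfies Λ_{C_{α,β}}(u,v) = Λ_{C*}(αu, βv). -/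
open Filter Set

noncomputable section

/-- Khoudraji-type asymmetrized copula `C_{α,β}(u,v) = u^{1−α} v^{1−β} C*(u^α, v^β)`. -/
def khoudraji (Cstar : ℝ → ℝ → ℝ) (α β : ℝ) : ℝ → ℝ → ℝ :=
  fun u v => u ^ (1 - α) * v ^ (1 - β) * Cstar (u ^ α) (v ^ β)

open Topology

/-!
With `P(t) = (1 - u/t)^(1-α) (1 - v/t)^(1-β)`, `Q(t) = C*((1 - u/t)^α, (1 - v/t)^β)` and
`R(t) = C*(1 - αu/t, 1 - βv/t)`, one has the exact identity
`t·C̄_{α,β}(u/t, v/t) = t·C̄*(αu/t, βv/t) + (1-α)u + (1-β)v + t(P - 1)Q + t(Q - R)`.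
Since `(1 - x/t)^c = 1 - cx/t + o(1/t)`, `t(P - 1) → -(1-α)u - (1-β)v`; and since a copula is
1-Lipschitz in each variable, `Q → 1` and `t(Q - R) → 0`. So the last three terms cancel in
the limit.
-/

namespace IsCopula

variable {C : ℝ → ℝ → ℝ}

theorem swap (hC : IsCopula C) : IsCopula (fun u v => C v u) := by
  refine ⟨fun u hu => ?_, fun u₁ u₂ v₁ v₂ h₁ h₁₂ h₂ h₃ h₃₄ h₄ => ?_⟩
  · obtain ⟨h0, h0', h1, h1'⟩ := hC.1 u hu
    exact ⟨h0', h0, h1', h1⟩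
  · linarith [hC.2 v₁ v₂ u₁ u₂ h₃ h₃₄ h₄ h₁ h₁₂ h₂]

-- 2-increasingness on the rectangles `[a, a'] × [0, b]` and `[a, a'] × [b, 1]`.
theorem sub_mem_Icc_of_le (hC : IsCopula C) {a a' b : ℝ} (ha : a ∈ Icc (0 : ℝ) 1)
    (ha' : a' ∈ Icc (0 : ℝ) 1) (hb : b ∈ Icc (0 : ℝ) 1) (h : a ≤ a') :
    C a' b - C a b ∈ Icc 0 (a' - a) := by
  have lower := hC.2 a a' 0 b ha.1 h ha'.2 le_rfl hb.1 hb.2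
  have upper := hC.2 a a' b 1 ha.1 h ha'.2 hb.1 hb.2 le_rfl
  obtain ⟨ha0, -, ha1, -⟩ := hC.1 a ha
  obtain ⟨ha'0, -, ha'1, -⟩ := hC.1 a' ha'
  constructor <;> linarith

theorem abs_sub_le_left (hC : IsCopula C) {a a' b : ℝ} (ha : a ∈ Icc (0 : ℝ) 1)
    (ha' : a' ∈ Icc (0 : ℝ) 1) (hb : b ∈ Icc (0 : ℝ) 1) :
    |C a b - C a' b| ≤ |a - a'| := by
  wlog h : a ≤ a' generalizing a a'
  · rw [abs_sub_comm, abs_sub_comm a]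
    exact this ha' ha (le_of_not_ge h)
  obtain ⟨hnonneg, hle⟩ := hC.sub_mem_Icc_of_le ha ha' hb h
  rwa [abs_sub_comm, abs_of_nonneg hnonneg, abs_sub_comm, abs_of_nonneg (sub_nonneg.2 h)]

theorem abs_sub_le (hC : IsCopula C) {a b a' b' : ℝ} (ha : a ∈ Icc (0 : ℝ) 1)
    (hb : b ∈ Icc (0 : ℝ) 1) (ha' : a' ∈ Icc (0 : ℝ) 1) (hb' : b' ∈ Icc (0 : ℝ) 1) :
    |C a b - C a' b'| ≤ |a - a'| + |b - b'| :=
  calc |C a b - C a' b'| ≤ |C a b - C a' b| + |C a' b - C a' b'| := _root_.abs_sub_le _ _ _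
    _ ≤ |a - a'| + |b - b'| :=
      add_le_add (hC.abs_sub_le_left ha ha' hb) (hC.swap.abs_sub_le_left hb hb' ha')

theorem tendsto_mul_sub {ι : Type*} {l : Filter ι} {w a b a' b' : ι → ℝ} (hC : IsCopula C)
    (hmem : ∀ᶠ i in l, a i ∈ Icc (0 : ℝ) 1 ∧ b i ∈ Icc (0 : ℝ) 1 ∧
      a' i ∈ Icc (0 : ℝ) 1 ∧ b' i ∈ Icc (0 : ℝ) 1)
    (ha : Tendsto (fun i => w i * (a i - a' i)) l (𝓝 0))
    (hb : Tendsto (fun i => w i * (b i - b' i)) l (𝓝 0)) :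
    Tendsto (fun i => w i * (C (a i) (b i) - C (a' i) (b' i))) l (𝓝 0) := by
  refine squeeze_zero_norm' ?_ (by simpa using ha.norm.add hb.norm)
  filter_upwards [hmem] with i ⟨hai, hbi, ha'i, hb'i⟩
  simp only [Real.norm_eq_abs, abs_mul, ← mul_add]
  exact mul_le_mul_of_nonneg_left (hC.abs_sub_le hai hbi ha'i hb'i) (abs_nonneg _)

theorem tendsto_one {ι : Type*} {l : Filter ι} {a b : ι → ℝ} (hC : IsCopula C)
    (hmem : ∀ᶠ i in l, a i ∈ Icc (0 : ℝ) 1 ∧ b i ∈ Icc (0 : ℝ) 1)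
    (ha : Tendsto a l (𝓝 1)) (hb : Tendsto b l (𝓝 1)) :
    Tendsto (fun i => C (a i) (b i)) l (𝓝 1) := by
  have h11 : C 1 1 = 1 := (hC.1 1 ⟨zero_le_one, le_rfl⟩).2.2.1
  have hone : (1 : ℝ) ∈ Icc (0 : ℝ) 1 := ⟨zero_le_one, le_rfl⟩
  have h := hC.tendsto_mul_sub (w := fun _ => 1) (a' := fun _ => 1) (b' := fun _ => 1)
    (hmem.mono fun _ ⟨hai, hbi⟩ => ⟨hai, hbi, hone, hone⟩)
    (by simpa using ha.sub_const 1) (by simpa using hb.sub_const 1)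
  simpa [h11, tendsto_sub_nhds_zero_iff] using h

end IsCopula

theorem HasDerivAt.tendsto_mul_sub_inv {f : ℝ → ℝ} {f' : ℝ} (hf : HasDerivAt f f' 0) :
    Tendsto (fun t => t * (f t⁻¹ - f 0)) atTop (𝓝 f') := by
  have hinv : Tendsto (fun t : ℝ => t⁻¹) atTop (𝓝[≠] 0) :=
    tendsto_inv_atTop_nhdsGT_zero.mono_right (nhdsWithin_mono _ fun _ hx => ne_of_gt hx)
  convert (hasDerivAt_iff_tendsto_slope.1 hf).comp hinv using 2 with t
  simp [slope_def_field, div_eq_mul_inv, mul_comm]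

theorem hasDerivAt_one_sub_mul_rpow (a c : ℝ) :
    HasDerivAt (fun s : ℝ => (1 - a * s) ^ c) (-(c * a)) 0 := by
  convert (((hasDerivAt_id' (0 : ℝ)).const_mul a).const_sub 1).rpow_const
    (p := c) (Or.inl (by simp)) using 1
  simp only [mul_zero, sub_zero, Real.one_rpow]
  ring

theorem tendsto_mul_one_sub_mul_inv_rpow_sub (a c : ℝ) :
    Tendsto (fun t : ℝ => t * ((1 - a * t⁻¹) ^ c - (1 - c * a * t⁻¹))) atTop (𝓝 0) := by
  have hlin : HasDerivAt (fun s : ℝ => 1 - c * a * s) (-(c * a)) 0 := by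
    simpa using ((hasDerivAt_id' (0 : ℝ)).const_mul (c * a)).const_sub 1
  simpa using ((hasDerivAt_one_sub_mul_rpow a c).sub hlin).tendsto_mul_sub_inv

theorem tendsto_one_sub_mul_inv_rpow (a c : ℝ) :
    Tendsto (fun t : ℝ => (1 - a * t⁻¹) ^ c) atTop (𝓝 1) := by
  simpa [Function.comp_def] using
    (hasDerivAt_one_sub_mul_rpow a c).continuousAt.tendsto.comp tendsto_inv_atTop_zero

theorem eventually_one_sub_mul_inv_mem_Icc {a : ℝ} (ha : a ∈ Icc (0 : ℝ) 1) :
    ∀ᶠ t : ℝ in atTop, 1 - a * t⁻¹ ∈ Icc (0 : ℝ) 1 := by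
  filter_upwards [eventually_ge_atTop 1] with t ht
  exact Icc.mem_iff_one_sub_mem.1
    (unitInterval.mul_mem ha ⟨inv_nonneg.2 (by linarith), inv_le_one_of_one_le₀ ht⟩)

theorem rpow_mem_Icc_zero_one {x c : ℝ} (hx : x ∈ Icc (0 : ℝ) 1) (hc : 0 ≤ c) :
    x ^ c ∈ Icc (0 : ℝ) 1 :=
  ⟨Real.rpow_nonneg hx.1 _, Real.rpow_le_one hx.1 hx.2 hc⟩

/-- **Tail copula of a Khoudraji-type asymmetrized copula.**
If `C*` is a copula, `α, β ∈ [0,1]`, `(u,v) ∈ [0,1]²`, and the limit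
`Λ_{C*}(αu, βv) = lim_{t→∞} t·C̄*(αu/t, βv/t)` exists, then
`lim_{t→∞} t·C̄_{α,β}(u/t, v/t) = Λ_{C*}(αu, βv)`. -/
theorem khoudraji_tailCopula (Cstar : ℝ → ℝ → ℝ) (hC : IsCopula Cstar)
    (α β : ℝ) (hα : α ∈ Icc (0 : ℝ) 1) (hβ : β ∈ Icc (0 : ℝ) 1)
    (u v : ℝ) (hu : u ∈ Icc (0 : ℝ) 1) (hv : v ∈ Icc (0 : ℝ) 1) (Lval : ℝ)
    (hL : Tendsto (fun t : ℝ => t * survCopula Cstar (α * u / t) (β * v / t))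
      atTop (nhds Lval)) :
    Tendsto (fun t : ℝ => t * survCopula (khoudraji Cstar α β) (u / t) (v / t))
      atTop (nhds Lval) := by
  simp only [div_eq_mul_inv] at hL ⊢
  have hmem : ∀ᶠ t : ℝ in atTop, (1 - u * t⁻¹) ^ α ∈ Icc (0 : ℝ) 1 ∧
      (1 - v * t⁻¹) ^ β ∈ Icc (0 : ℝ) 1 ∧ 1 - α * u * t⁻¹ ∈ Icc (0 : ℝ) 1 ∧
      1 - β * v * t⁻¹ ∈ Icc (0 : ℝ) 1 := by
    filter_upwards [eventually_one_sub_mul_inv_mem_Icc hu, eventually_one_sub_mul_inv_mem_Icc hv,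
      eventually_one_sub_mul_inv_mem_Icc (unitInterval.mul_mem hα hu),
      eventually_one_sub_mul_inv_mem_Icc (unitInterval.mul_mem hβ hv)] with t hut hvt hαut hβvt
    exact ⟨rpow_mem_Icc_zero_one hut hα.1, rpow_mem_Icc_zero_one hvt hβ.1, hαut, hβvt⟩
  have hQR := hC.tendsto_mul_sub hmem (tendsto_mul_one_sub_mul_inv_rpow_sub u α)
    (tendsto_mul_one_sub_mul_inv_rpow_sub v β)
  have hQ : Tendsto (fun t : ℝ => Cstar ((1 - u * t⁻¹) ^ α) ((1 - v * t⁻¹) ^ β)) atTop (𝓝 1) :=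
    hC.tendsto_one (hmem.mono fun _ h => ⟨h.1, h.2.1⟩) (tendsto_one_sub_mul_inv_rpow u α)
      (tendsto_one_sub_mul_inv_rpow v β)
  have hP := ((hasDerivAt_one_sub_mul_rpow u (1 - α)).mul
    (hasDerivAt_one_sub_mul_rpow v (1 - β))).tendsto_mul_sub_inv
  simp only [Pi.mul_apply, mul_zero, sub_zero, Real.one_rpow, mul_one, one_mul] at hP
  have hsum := ((hL.add_const ((1 - α) * u + (1 - β) * v)).add (hP.mul hQ)).add hQR
  convert hsum.congr' ?_ using 2
  · ring
  · filter_upwards [eventually_gt_atTop 0] with t ht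
    simp only [survCopula, khoudraji]
    linear_combination (α * u + β * v - u - v) * mul_inv_cancel₀ ht.ne'
end
end

section
/- Let k ≥ 1 be an integer and let ρ_1, …, ρ_{k−1} be positive integers. Then (3/k²) ∫₀¹ ( Σ_{i=1}^{k−1} 1(ρ_i < k·u + 1) )² du = (3/k³) Σ_{i=1}^{k−1} Σ_{j=1}^{k−1} ( k + 1 − max(ρ_i, ρ_j) )₊. In particular, the sample Extreme Tail Association coefficient η_{k,n}(X|Y) equals 3∫₀¹ Λ̂_{k,n}(u,1)² du, where Λ̂_{k,n}(u,1) = (1/k) Σ_{i=1}^{k−1} 1(ρ_i < ku + 1) is the empirical tail copula evaluated at (u,1). -/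
/-!
Squaring the count `#{i : ρ_i < ku + 1}` turns it into the number of pairs `(i, j)` with
`max(ρ_i, ρ_j) < ku + 1`. For `m = max(ρ_i, ρ_j) ≥ 1` the set of `u ∈ [0, 1]` with `m < ku + 1`
is the interval `((m - 1)/k, 1]`, of length `(k + 1 - m)₊ / k`; summing over the pairs gives the
double sum.
-/

open Set MeasureTheory

theorem sum_ite_lt_sq {ι α R : Type*} [LinearOrder α] [Semiring R] (s : Finset ι) (a : ι → α)
    (t : α) :
    (∑ i ∈ s, if a i < t then (1 : R) else 0) ^ 2 =
      ∑ i ∈ s, ∑ j ∈ s, if max (a i) (a j) < t then (1 : R) else 0 := by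
  rw [sq, Finset.sum_mul_sum]
  simp only [max_lt_iff, ite_zero_mul_ite_zero, mul_one]

theorem intervalIntegrable_ite_lt_mul_add {c m b : ℝ} (hc : 0 ≤ c) (u₀ u₁ : ℝ) :
    IntervalIntegrable (fun u => if m < c * u + b then (1 : ℝ) else 0) volume u₀ u₁ := by
  refine Monotone.intervalIntegrable fun u v huv => ?_
  have : c * u ≤ c * v := mul_le_mul_of_nonneg_left huv hc
  split_ifs <;> linarith

theorem integral_ite_lt_zero_one {a : ℝ} (ha : 0 ≤ a) :
    ∫ u in (0 : ℝ)..1, (if a < u then (1 : ℝ) else 0) = max (1 - a) 0 := by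
  have hind : (fun u => if a < u then (1 : ℝ) else 0) = (Ioi a).indicator 1 := by
    ext u; simp [indicator]
  rw [intervalIntegral.integral_of_le zero_le_one, hind, setIntegral_indicator measurableSet_Ioi,
    Ioc_inter_Ioi, max_eq_right ha]
  simp [Real.volume_real_Ioc]

theorem integral_ite_lt_mul_add_one {c m : ℝ} (hc : 0 < c) (hm : 1 ≤ m) :
    ∫ u in (0 : ℝ)..1, (if m < c * u + 1 then (1 : ℝ) else 0) = max (c + 1 - m) 0 / c := by
  have hcond : ∀ u, m < c * u + 1 ↔ (m - 1) / c < u := fun u => by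
    rw [div_lt_iff₀ hc]; constructor <;> intro <;> linarith
  simp_rw [hcond]
  rw [integral_ite_lt_zero_one (div_nonneg (by linarith) hc.le), ← zero_div c,
    ← max_div_div_right hc.le, zero_div c, one_sub_div hc.ne']
  ring_nf

theorem sampleETA_integral_repr_general (k : ℕ) (ρ : ℕ → ℕ)
    (hρ : ∀ i ∈ Finset.Icc 1 (k - 1), 1 ≤ ρ i) :
    3 / (k : ℝ) ^ 2 *
        ∫ u in (0:ℝ)..1,
          (∑ i ∈ Finset.Icc 1 (k - 1), if (ρ i : ℝ) < k * u + 1 then (1 : ℝ) else 0) ^ 2 =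
      3 / (k : ℝ) ^ 3 *
        ∑ i ∈ Finset.Icc 1 (k - 1), ∑ j ∈ Finset.Icc 1 (k - 1),
          max ((k : ℝ) + 1 - max (ρ i : ℝ) (ρ j : ℝ)) 0 := by
  set s := Finset.Icc 1 (k - 1)
  have hint : ∀ i j, IntervalIntegrable
      (fun u => if max (ρ i : ℝ) (ρ j) < k * u + 1 then (1 : ℝ) else 0) volume 0 1 :=
    fun _ _ => intervalIntegrable_ite_lt_mul_add (Nat.cast_nonneg k) 0 1
  have hterm : ∀ i ∈ s, ∀ j ∈ s,
      ∫ u in (0 : ℝ)..1, (if max (ρ i : ℝ) (ρ j) < k * u + 1 then (1 : ℝ) else 0) =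
        max ((k : ℝ) + 1 - max (ρ i : ℝ) (ρ j)) 0 / k := by
    intro i hi j _
    have hk : 0 < k := by simp only [s, Finset.mem_Icc] at hi; omega
    exact integral_ite_lt_mul_add_one (by exact_mod_cast hk)
      (le_max_of_le_left (by exact_mod_cast hρ i hi))
  simp_rw [sum_ite_lt_sq]
  rw [intervalIntegral.integral_finsetSum fun i _ => by
      simpa only [Finset.sum_fn] using IntervalIntegrable.sum s fun j _ => hint i j]
  simp_rw [intervalIntegral.integral_finsetSum fun j _ => hint _ j]
  rw [Finset.sum_congr rfl fun i hi => Finset.sum_congr rfl (hterm i hi)]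
  simp_rw [← Finset.sum_div]
  ring

/-- **Integral representation of the sample ETA coefficient.**
For an integer `k ≥ 1` and positive integers `ρ_1, …, ρ_{k−1}`,
`(3/k²) ∫₀¹ (Σ_{i=1}^{k−1} 1(ρ_i < ku + 1))² du
  = (3/k³) Σ_{i=1}^{k−1} Σ_{j=1}^{k−1} (k + 1 − max(ρ_i, ρ_j))₊`,
i.e. `η_{k,n}(X|Y) = 3∫₀¹ Λ̂_{k,n}(u,1)² du`. -/
theorem sampleETA_integral_repr (k : ℕ) (hk : 1 ≤ k) (ρ : ℕ → ℕ)
    (hρ : ∀ i ∈ Finset.Icc 1 (k - 1), 1 ≤ ρ i) :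
    3 / (k : ℝ) ^ 2 *
        ∫ u in (0:ℝ)..1,
          (∑ i ∈ Finset.Icc 1 (k - 1), if (ρ i : ℝ) < k * u + 1 then (1 : ℝ) else 0) ^ 2 =
      3 / (k : ℝ) ^ 3 *
        ∑ i ∈ Finset.Icc 1 (k - 1), ∑ j ∈ Finset.Icc 1 (k - 1),
          max ((k : ℝ) + 1 - max (ρ i : ℝ) (ρ j : ℝ)) 0 :=
  sampleETA_integral_repr_general k ρ hρ
end

section
/- Let k ≥ 1 be an integer. Then (3/k³) Σ_{i=1}^{k−1} Σ_{j=1}^{k−1} ( k + 1 − max(i,j) ) = (1 − 1/k)(1 + 5/(2k) − 3/k²). Moreover, for any injective map ρ from {1,…,k−1} to the positive integers, (3/k³) Σ_{i=1}^{k−1} Σ_{j=1}^{k−1} ( k + 1 − max(ρ_i, ρ_j) )₊ ≤ (1 − 1/k)(1 + 5/(2k) − 3/k²); i.e., the sample ETA coefficient η_{k,n}(X|Y) always lies in [0, (1 − 1/k)(1 + 5/(2k) − 3/k²)], with the maximum attained when ρ_i = i for all 1 ≤ i ≤ k−1. -/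
/-
For a positive integer `a`, `(k + 1 - max a b)₊` counts the levels `s ∈ [1, k]` with
`a ≤ s` and `b ≤ s`, so the double sum over a set `T` of positive integers equals
`∑_{s=1}^k #{a ∈ T | a ≤ s}²`. Each count is at most `min #T s`, which is exactly the count
for `T = {1, …, #T}`; hence the image of `ρ` is beaten by the initial segment `{1, …, k - 1}`.
There the positive part is inactive and the sum is evaluated from
`∑_{i,j ≤ m} max i j = m (m + 1) (4m - 1) / 6`.
-/

open Finset

lemma sum_sum_max_Icc (m : ℕ) :
    ∑ i ∈ Finset.Icc 1 m, ∑ j ∈ Finset.Icc 1 m, max (i : ℝ) j =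
      m * (m + 1) * (4 * m - 1) / 6 := by
  induction m with
  | zero => simp
  | succ m ih =>
    have hmax_left : ∀ i ∈ Finset.Icc 1 m, max (i : ℝ) (m + 1) = m + 1 := fun i hi =>
      max_eq_right (by have := (Finset.mem_Icc.mp hi).2; exact_mod_cast this.trans m.le_succ)
    have hmax_right : ∀ j ∈ Finset.Icc 1 m, max ((m : ℝ) + 1) j = m + 1 := fun j hj =>
      max_eq_left (by have := (Finset.mem_Icc.mp hj).2; exact_mod_cast this.trans m.le_succ)
    simp only [sum_Icc_succ_top (Nat.le_add_left 1 m), sum_add_distrib, ih, Nat.cast_succ,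
      sum_congr rfl hmax_left, sum_congr rfl hmax_right, max_self, sum_const, Nat.card_Icc,
      nsmul_eq_mul, Nat.add_sub_cancel]
    ring

lemma posPart_sub_max_eq_sum_indicator (k a b : ℕ) (ha : 1 ≤ a) :
    max ((k : ℝ) + 1 - max (a : ℝ) b) 0 =
      ∑ s ∈ Finset.Icc 1 k, (if a ≤ s then (1 : ℝ) else 0) * (if b ≤ s then 1 else 0) := by
  simp only [ite_zero_mul_ite_zero, mul_one, sum_boole]
  have hfilter : {s ∈ Finset.Icc 1 k | a ≤ s ∧ b ≤ s} = Finset.Icc (max a b) k := by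
    ext s; simp only [mem_filter, Finset.mem_Icc]; omega
  rw [hfilter, Nat.card_Icc, ← Nat.cast_max]
  rcases le_total (max a b) (k + 1) with h | h
  · have h' : ((max a b : ℕ) : ℝ) ≤ k + 1 := by exact_mod_cast h
    rw [Nat.cast_sub h, max_eq_left (by linarith)]
    push_cast
    ring
  · have h' : (k : ℝ) + 1 ≤ (max a b : ℕ) := by exact_mod_cast h
    rw [Nat.sub_eq_zero_of_le h, max_eq_right (by linarith), Nat.cast_zero]

lemma sum_sum_posPart_sub_max_eq_sum_sq (k : ℕ) {T : Finset ℕ} (hT : ∀ a ∈ T, 1 ≤ a) :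
    ∑ a ∈ T, ∑ b ∈ T, max ((k : ℝ) + 1 - max (a : ℝ) b) 0 =
      ∑ s ∈ Finset.Icc 1 k, (#{a ∈ T | a ≤ s} : ℝ) ^ 2 := by
  rw [sum_congr rfl fun a ha => sum_congr rfl fun b _ =>
    posPart_sub_max_eq_sum_indicator k a b (hT a ha)]
  rw [sum_congr rfl fun a _ => sum_comm, sum_comm]
  refine sum_congr rfl fun s _ => ?_
  simp only [← mul_sum, ← sum_mul, sum_boole, sq]

lemma card_filter_le_le_min_card_of_pos {T : Finset ℕ} (hT : ∀ a ∈ T, 1 ≤ a) (s : ℕ) :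
    #{a ∈ T | a ≤ s} ≤ min #T s := by
  refine le_min (card_filter_le _ _) ?_
  calc #{a ∈ T | a ≤ s} ≤ #(Finset.Icc 1 s) := card_le_card fun a ha =>
        Finset.mem_Icc.mpr ⟨hT a (mem_filter.mp ha).1, (mem_filter.mp ha).2⟩
    _ = s := by simp

lemma card_filter_Icc_one_le (m s : ℕ) : #{a ∈ Finset.Icc 1 m | a ≤ s} = min m s := by
  have : {a ∈ Finset.Icc 1 m | a ≤ s} = Finset.Icc 1 (min m s) := by
    ext a; simp only [mem_filter, Finset.mem_Icc]; omega
  simp [this]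

lemma sum_sum_posPart_sub_max_le_Icc (k : ℕ) {T : Finset ℕ} (hT : ∀ a ∈ T, 1 ≤ a) :
    ∑ a ∈ T, ∑ b ∈ T, max ((k : ℝ) + 1 - max (a : ℝ) b) 0 ≤
      ∑ a ∈ Finset.Icc 1 #T, ∑ b ∈ Finset.Icc 1 #T, max ((k : ℝ) + 1 - max (a : ℝ) b) 0 := by
  rw [sum_sum_posPart_sub_max_eq_sum_sq k hT,
    sum_sum_posPart_sub_max_eq_sum_sq k fun a ha => (Finset.mem_Icc.mp ha).1]
  refine sum_le_sum fun s _ => pow_le_pow_left₀ (Nat.cast_nonneg _) ?_ 2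
  rw [card_filter_Icc_one_le]
  exact_mod_cast card_filter_le_le_min_card_of_pos hT s

lemma sum_sum_comp_eq_sum_sum_image {ι κ M : Type*} [DecidableEq κ] [AddCommMonoid M]
    {s : Finset ι} {ρ : ι → κ} (hρ : Set.InjOn ρ s) (f : κ → κ → M) :
    ∑ i ∈ s, ∑ j ∈ s, f (ρ i) (ρ j) = ∑ a ∈ s.image ρ, ∑ b ∈ s.image ρ, f a b := by
  simp only [sum_image hρ]

/-- **Range of the sample ETA coefficient.**
For an integer `k ≥ 1`:
`(3/k³) Σ_{i=1}^{k−1} Σ_{j=1}^{k−1} (k+1 − max(i,j)) = (1 − 1/k)(1 + 5/(2k) − 3/k²)`,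
and for every injective map `ρ` from `{1,…,k−1}` to the positive integers the sample ETA
coefficient `(3/k³) Σ_i Σ_j (k+1 − max(ρ_i,ρ_j))₊` lies in
`[0, (1 − 1/k)(1 + 5/(2k) − 3/k²)]`. -/
theorem sampleETA_range (k : ℕ) (hk : 1 ≤ k) :
    (3 / (k : ℝ) ^ 3 *
        ∑ i ∈ Finset.Icc 1 (k - 1), ∑ j ∈ Finset.Icc 1 (k - 1),
          ((k : ℝ) + 1 - max (i : ℝ) (j : ℝ)) =
      (1 - 1 / (k : ℝ)) * (1 + 5 / (2 * (k : ℝ)) - 3 / (k : ℝ) ^ 2)) ∧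
    ∀ ρ : ℕ → ℕ, Set.InjOn ρ ((Finset.Icc 1 (k - 1) : Finset ℕ) : Set ℕ) →
      (∀ i ∈ Finset.Icc 1 (k - 1), 1 ≤ ρ i) →
      0 ≤ 3 / (k : ℝ) ^ 3 *
          ∑ i ∈ Finset.Icc 1 (k - 1), ∑ j ∈ Finset.Icc 1 (k - 1),
            max ((k : ℝ) + 1 - max (ρ i : ℝ) (ρ j : ℝ)) 0 ∧
        3 / (k : ℝ) ^ 3 *
            ∑ i ∈ Finset.Icc 1 (k - 1), ∑ j ∈ Finset.Icc 1 (k - 1),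
              max ((k : ℝ) + 1 - max (ρ i : ℝ) (ρ j : ℝ)) 0 ≤
          (1 - 1 / (k : ℝ)) * (1 + 5 / (2 * (k : ℝ)) - 3 / (k : ℝ) ^ 2) := by
  have hk_pos : (0 : ℝ) < k := by exact_mod_cast hk
  have hm : ((k - 1 : ℕ) : ℝ) = k - 1 := by rw [Nat.cast_sub hk, Nat.cast_one]
  have identity : 3 / (k : ℝ) ^ 3 *
      ∑ i ∈ Finset.Icc 1 (k - 1), ∑ j ∈ Finset.Icc 1 (k - 1), ((k : ℝ) + 1 - max (i : ℝ) j) =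
      (1 - 1 / (k : ℝ)) * (1 + 5 / (2 * (k : ℝ)) - 3 / (k : ℝ) ^ 2) := by
    simp only [sum_sub_distrib, sum_sum_max_Icc, sum_const, Nat.card_Icc, nsmul_eq_mul,
      Nat.add_sub_cancel, hm]
    field_simp
    ring
  have positive_part_inactive : ∀ i ∈ Finset.Icc 1 (k - 1), ∀ j ∈ Finset.Icc 1 (k - 1),
      max ((k : ℝ) + 1 - max (i : ℝ) j) 0 = (k : ℝ) + 1 - max (i : ℝ) j := by
    intro i hi j hj
    have hmax : max i j ≤ k :=
      (max_le (Finset.mem_Icc.mp hi).2 (Finset.mem_Icc.mp hj).2).trans (Nat.sub_le k 1)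
    have : max (i : ℝ) j ≤ k := by exact_mod_cast hmax
    exact max_eq_left (by linarith)
  refine ⟨identity, fun ρ hρ hρ_pos => ⟨?_, ?_⟩⟩
  · exact mul_nonneg (by positivity)
      (sum_nonneg fun i _ => sum_nonneg fun j _ => le_max_right _ _)
  · have h_image_pos : ∀ a ∈ (Finset.Icc 1 (k - 1)).image ρ, 1 ≤ a :=
      forall_mem_image.mpr hρ_pos
    rw [← identity, ← sum_congr rfl fun i hi => sum_congr rfl (positive_part_inactive i hi),
      sum_sum_comp_eq_sum_sum_image hρ fun a b => max ((k : ℝ) + 1 - max (a : ℝ) b) 0]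
    gcongr
    simpa only [card_image_of_injOn hρ, Nat.card_Icc, Nat.add_sub_cancel]
      using sum_sum_posPart_sub_max_le_Icc k h_image_pos
end

section
/- Fix θ ∈ [0,1] and let C_θ(u,v) := min( u, θv + (1−θ)(u+v−1)₊ ) for (u,v) ∈ [0,1]², with survival copula C̄_θ(x,y) := x + y − 1 + C_θ(1−x, 1−y). Then for every (u,v) ∈ [0,1]², lim_{t→∞} t·C̄_θ(u/t, v/t) = min(θu, v); consequently the tail copula of C_θ is Λ_θ(u,v) = min(θu, v), and the associated ETA measures are η(X|Y) = 3∫₀¹ Λ_θ(u,1)² du = θ², η(Y|X) = 3∫₀¹ Λ_θ(1,v)² dv = 3θ² − 2θ³, and the tail asymmetry measure is Δ(X,Y) = η(X|Y) − η(Y|X) = −2θ²(1−θ). -/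
open Filter Set

noncomputable section

/-- The asymmetric copula `C_θ(u,v) = min(u, θv + (1−θ)(u+v−1)₊)` of Nelsen's example. -/
def nelsenC (θ : ℝ) : ℝ → ℝ → ℝ :=
  fun u v => min u (θ * v + (1 - θ) * max (u + v - 1) 0)

/-! Near the corner `(0,0)` the positive part in `C_θ(1−x, 1−y)` is inactive, so `C̄_θ` is exactly
the homogeneous function `min(θx, y)` there; hence `t·C̄_θ(u/t, v/t)` is eventually constant in `t`.
The ETA integrals are then elementary, after splitting `∫₀¹ min(θ, v)² dv` at `v = θ`. -/

theorem survCopula_nelsenC_of_add_le_one (θ : ℝ) {x y : ℝ} (h : x + y ≤ 1) :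
    survCopula (nelsenC θ) x y = min (θ * x) y := by
  have hmax : max (1 - x + (1 - y) - 1) 0 = 1 - x - y := by
    rw [max_eq_left (by linarith)]; ring
  simp only [survCopula, nelsenC, hmax]
  rw [← min_add_add_left, min_comm]
  congr 1 <;> ring

theorem tendsto_mul_survCopula_nelsenC (θ u v : ℝ) :
    Tendsto (fun t : ℝ => t * survCopula (nelsenC θ) (u / t) (v / t)) atTop
      (nhds (min (θ * u) v)) := by
  refine tendsto_const_nhds.congr' ?_
  filter_upwards [eventually_gt_atTop (max (u + v) 0)] with t ht
  have ht0 : 0 < t := (le_max_right _ _).trans_lt ht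
  have hsmall : u / t + v / t ≤ 1 := by
    rw [← add_div, div_le_one ht0]
    exact ((le_max_left _ _).trans_lt ht).le
  rw [survCopula_nelsenC_of_add_le_one θ hsmall, mul_min_of_nonneg _ _ ht0.le]
  congr 1 <;> field_simp

theorem integral_min_mul_one_sq {c : ℝ} (hc : c ≤ 1) :
    ∫ u in (0 : ℝ)..1, (min (c * u) 1) ^ 2 = c ^ 2 / 3 := by
  have hcongr : EqOn (fun u => (min (c * u) 1) ^ 2) (fun u => c ^ 2 * u ^ 2) (uIcc 0 1) := by
    intro u hu
    rw [uIcc_of_le zero_le_one] at hu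
    have hcu : c * u ≤ 1 := by nlinarith [hu.1, hu.2]
    simp only [min_eq_left hcu, mul_pow]
  rw [intervalIntegral.integral_congr hcongr, intervalIntegral.integral_const_mul, integral_pow]
  ring

theorem integral_min_sq {c : ℝ} (hc₀ : 0 ≤ c) (hc₁ : c ≤ 1) :
    ∫ v in (0 : ℝ)..1, (min c v) ^ 2 = c ^ 2 - 2 * c ^ 3 / 3 := by
  have hint : ∀ a b : ℝ, IntervalIntegrable (fun v => (min c v) ^ 2) MeasureTheory.volume a b :=
    fun a b => ((continuous_const.min continuous_id).pow 2).intervalIntegrable a b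
  have hbelow : ∫ v in (0 : ℝ)..c, (min c v) ^ 2 = c ^ 3 / 3 := by
    have hcongr : EqOn (fun v => (min c v) ^ 2) (fun v => v ^ 2) (uIcc 0 c) := by
      intro v hv
      rw [uIcc_of_le hc₀] at hv
      simp only [min_eq_right hv.2]
    rw [intervalIntegral.integral_congr hcongr, integral_pow]
    ring
  have habove : ∫ v in c..(1 : ℝ), (min c v) ^ 2 = c ^ 2 * (1 - c) := by
    have hcongr : EqOn (fun v => (min c v) ^ 2) (fun _ => c ^ 2) (uIcc c 1) := by
      intro v hv
      rw [uIcc_of_le hc₁] at hv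
      simp only [min_eq_left hv.1]
    rw [intervalIntegral.integral_congr hcongr, intervalIntegral.integral_const, smul_eq_mul]
    ring
  rw [← intervalIntegral.integral_add_adjacent_intervals (hint 0 c) (hint c 1), hbelow, habove]
  ring

/-- **Tail copula and ETA measures for Nelsen's asymmetric copula.**
For `θ ∈ [0,1]`: `lim_{t→∞} t·C̄_θ(u/t, v/t) = min(θu, v)` for all `(u,v) ∈ [0,1]²`, so the
tail copula is `Λ_θ(u,v) = min(θu,v)`, and the corresponding ETA measures are
`η(X|Y) = 3∫₀¹ min(θu,1)² du = θ²`, `η(Y|X) = 3∫₀¹ min(θ,v)² dv = 3θ² − 2θ³`, and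
`Δ(X,Y) = η(X|Y) − η(Y|X) = −2θ²(1−θ)`. -/
theorem nelsen_tailCopula_eta (θ : ℝ) (hθ : θ ∈ Icc (0 : ℝ) 1) :
    (∀ u ∈ Icc (0 : ℝ) 1, ∀ v ∈ Icc (0 : ℝ) 1,
      Tendsto (fun t : ℝ => t * survCopula (nelsenC θ) (u / t) (v / t)) atTop
        (nhds (min (θ * u) v))) ∧
    (3 * ∫ u in (0:ℝ)..1, (min (θ * u) 1) ^ 2 = θ ^ 2) ∧
    (3 * ∫ v in (0:ℝ)..1, (min (θ * 1) v) ^ 2 = 3 * θ ^ 2 - 2 * θ ^ 3) ∧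
    ((3 * ∫ u in (0:ℝ)..1, (min (θ * u) 1) ^ 2) -
        (3 * ∫ v in (0:ℝ)..1, (min (θ * 1) v) ^ 2) = -2 * θ ^ 2 * (1 - θ)) := by
  have hXY : 3 * ∫ u in (0:ℝ)..1, (min (θ * u) 1) ^ 2 = θ ^ 2 := by
    rw [integral_min_mul_one_sq hθ.2]; ring
  have hYX : 3 * ∫ v in (0:ℝ)..1, (min (θ * 1) v) ^ 2 = 3 * θ ^ 2 - 2 * θ ^ 3 := by
    rw [mul_one, integral_min_sq hθ.1 hθ.2]; ring
  refine ⟨fun u _ v _ => tendsto_mul_survCopula_nelsenC θ u v, hXY, hYX, ?_⟩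
  rw [hXY, hYX]; ring
end
end

section
/- Fix δ ∈ [1,∞) and let C_δ(u,v) := exp( −[ (−log u)^δ + (−log v)^δ ]^{1/δ} ) be the Gumbel copula on (0,1]², with survival copula C̄_δ(x,y) := x + y − 1 + C_δ(1−x, 1−y). Then for every (u,v) ∈ [0,1]² (not both zero), lim_{t→∞} t·C̄_δ(u/t, v/t) = u + v − ( u^δ + v^δ )^{1/δ}; that is, the upper tail copula of the Gumbel copula is Λ_δ(u,v) = u + v − (u^δ + v^δ)^{1/δ}. -/
/-!
With `a t = -log (1 - u/t)` and `b t = -log (1 - v/t)` we have `t · a t → u`, `t · b t → v`, and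
`t · C̄_δ(u/t, v/t) = u + v + t · (exp (-N (a t, b t)) - 1)` for the ℓ^δ norm `N`. Since `N` is
positively homogeneous and continuous, `t · N (a t, b t) = N (t · a t, t · b t) → N (u, v)`, and
`t · (exp (x t) - 1) ~ t · x t` whenever `t · x t` converges.
-/

open Filter Set

noncomputable section

/-- The Gumbel copula `C_δ(u,v) = exp(−[(−log u)^δ + (−log v)^δ]^{1/δ})`. -/
def gumbelC (δ : ℝ) : ℝ → ℝ → ℝ :=
  fun u v => Real.exp (-(((-Real.log u) ^ δ + (-Real.log v) ^ δ) ^ (1 / δ)))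

open Real Topology

def lpNormPair (δ a b : ℝ) : ℝ := (a ^ δ + b ^ δ) ^ (1 / δ)

theorem lpNormPair_mul {δ : ℝ} (hδ : δ ≠ 0) {t a b : ℝ} (ht : 0 ≤ t) (ha : 0 ≤ a) (hb : 0 ≤ b) :
    lpNormPair δ (t * a) (t * b) = t * lpNormPair δ a b := by
  rw [lpNormPair, lpNormPair, mul_rpow ht ha, mul_rpow ht hb, ← mul_add,
    mul_rpow (rpow_nonneg ht δ) (by positivity), ← rpow_mul ht, mul_one_div_cancel hδ, rpow_one]

theorem Filter.Tendsto.lpNormPair {α : Type*} {l : Filter α} {f g : α → ℝ} {a b δ : ℝ}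
    (hf : Tendsto f l (𝓝 a)) (hg : Tendsto g l (𝓝 b)) (hδ : 0 < δ) :
    Tendsto (fun x => lpNormPair δ (f x) (g x)) l (𝓝 (lpNormPair δ a b)) :=
  ((hf.rpow_const (Or.inr hδ.le)).add (hg.rpow_const (Or.inr hδ.le))).rpow_const
    (Or.inr (by positivity))

theorem tendsto_mul_neg_log_one_sub_div_atTop (u : ℝ) :
    Tendsto (fun t => t * -log (1 - u / t)) atTop (𝓝 u) := by
  simpa [neg_div, ← sub_eq_add_neg] using (tendsto_mul_log_one_add_div_atTop (-u)).neg

theorem tendsto_mul_exp_sub_one_of_tendsto {f : ℝ → ℝ} {L : ℝ}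
    (hf : Tendsto (fun t => t * f t) atTop (𝓝 L)) :
    Tendsto (fun t => t * (exp (f t) - 1)) atTop (𝓝 L) := by
  have hf0 : Tendsto f atTop (𝓝 0) := by
    simpa using (hf.mul tendsto_inv_atTop_zero).congr' <| by
      filter_upwards [eventually_ne_atTop 0] with t ht
      field_simp
  -- `exp x - 1 = x * dslope exp 0 x` needs no division by `f t`, which may vanish.
  have hslope := (continuousAt_dslope_same.mpr (differentiableAt_exp (x := 0))).tendsto.comp hf0
  rw [dslope_same, Real.deriv_exp, exp_zero] at hslope
  refine (mul_one L ▸ hf.mul hslope).congr fun t => ?_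
  have := sub_smul_dslope exp 0 (f t)
  rw [sub_zero, smul_eq_mul, exp_zero] at this
  rw [Function.comp_apply, mul_assoc, this]

theorem gumbelC_eq_exp_neg_lpNormPair (δ u v : ℝ) :
    gumbelC δ u v = exp (-lpNormPair δ (-log u) (-log v)) :=
  rfl

theorem mul_survCopula_div (C : ℝ → ℝ → ℝ) (u v : ℝ) {t : ℝ} (ht : t ≠ 0) :
    t * survCopula C (u / t) (v / t) = u + v + t * (C (1 - u / t) (1 - v / t) - 1) := by
  simp only [survCopula]
  field_simp
  ring

theorem neg_log_one_sub_div_nonneg {u t : ℝ} (hu : u ∈ Icc (0 : ℝ) 1) (ht : 1 ≤ t) :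
    0 ≤ -log (1 - u / t) := by
  have hut : u / t ≤ 1 := (div_le_one₀ (by linarith)).mpr (hu.2.trans ht)
  have hut' : 0 ≤ u / t := div_nonneg hu.1 (by linarith)
  exact neg_nonneg.mpr (log_nonpos (by linarith) (by linarith))

theorem gumbel_tailCopula_general (δ : ℝ) (hδ : 1 ≤ δ) (u v : ℝ)
    (hu : u ∈ Icc (0 : ℝ) 1) (hv : v ∈ Icc (0 : ℝ) 1) :
    Tendsto (fun t : ℝ => t * survCopula (gumbelC δ) (u / t) (v / t)) atTop
      (nhds (u + v - (u ^ δ + v ^ δ) ^ (1 / δ))) := by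
  have hδ0 : 0 < δ := by linarith
  have hscaled : Tendsto (fun t => t * -lpNormPair δ (-log (1 - u / t)) (-log (1 - v / t)))
      atTop (𝓝 (-lpNormPair δ u v)) := by
    refine ((tendsto_mul_neg_log_one_sub_div_atTop u).lpNormPair
      (tendsto_mul_neg_log_one_sub_div_atTop v) hδ0).neg.congr' ?_
    filter_upwards [eventually_ge_atTop 1] with t ht
    rw [lpNormPair_mul hδ0.ne' (by linarith) (neg_log_one_sub_div_nonneg hu ht)
      (neg_log_one_sub_div_nonneg hv ht), mul_neg]
  refine ((tendsto_mul_exp_sub_one_of_tendsto hscaled).const_add (u + v)).congr' ?_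
  filter_upwards [eventually_ne_atTop 0] with t ht
  rw [mul_survCopula_div _ _ _ ht, gumbelC_eq_exp_neg_lpNormPair]

/-- **Upper tail copula of the Gumbel copula.**
For `δ ≥ 1` and `(u,v) ∈ [0,1]²` not both zero,
`lim_{t→∞} t·C̄_δ(u/t, v/t) = u + v − (u^δ + v^δ)^{1/δ}`. -/
theorem gumbel_tailCopula (δ : ℝ) (hδ : 1 ≤ δ) (u v : ℝ)
    (hu : u ∈ Icc (0 : ℝ) 1) (hv : v ∈ Icc (0 : ℝ) 1) (huv : ¬(u = 0 ∧ v = 0)) :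
    Tendsto (fun t : ℝ => t * survCopula (gumbelC δ) (u / t) (v / t)) atTop
      (nhds (u + v - (u ^ δ + v ^ δ) ^ (1 / δ))) :=
  gumbel_tailCopula_general δ hδ u v hu hv
end
end

section
/- Fix an integer m ≥ 2 and let C_m(u,v) := min(u, v^{1/m}) · v^{1−1/m} for (u,v) ∈ [0,1]², with survival copula C̄_m(x,y) := x + y − 1 + C_m(1−x, 1−y). Then for every (u,v) ∈ [0,1]², lim_{t→∞} t·C̄_m(u/t, v/t) = min(u, v/m); consequently the tail copula is Λ_m(u,v) = min(u, v/m), and the associated measures are η(X|Y) = 3∫₀¹ min(u, 1/m)² du = 3/m² − 2/m³, η(Y|X) = 3∫₀¹ min(1, v/m)² dv = 1/m², and Δ(X,Y) = η(X|Y) − η(Y|X) = (2/m²)(1 − 1/m). -/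
open Filter Set

noncomputable section

/-- The copula `C_m(u,v) = min(u, v^{1/m})·v^{1−1/m}` of the max-model example. -/
def maxC (m : ℕ) : ℝ → ℝ → ℝ :=
  fun u v => min u (v ^ ((1 : ℝ) / m)) * v ^ (1 - (1 : ℝ) / m)

/-!
For `t > max 0 v` put `b = 1 - v/t > 0`. Since `b^{1/m} · b^{1-1/m} = b`, the survival copula
collapses to `t · C̄_m(u/t, v/t) = min (v + (t - u)(b^{1-1/m} - 1)) u`, and `(t - u)(b^{1-1/m} - 1)`
tends to `-v(1 - 1/m)`, the derivative at `0` of `s ↦ (1 - v s)^{1-1/m}`. The two ETA integrals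
are elementary once `min` is resolved on the pieces of `[0,1]` where it is affine.
-/

open Topology

theorem HasDerivAt.tendsto_smul_sub_inv_atTop {E : Type*} [NormedAddCommGroup E]
    [NormedSpace ℝ E] {f : ℝ → E} {f' : E} {x : ℝ} (hf : HasDerivAt f f' x) :
    Tendsto (fun t : ℝ => t • (f (x + t⁻¹) - f x)) atTop (𝓝 f') := by
  refine (hf.tendsto_slope_zero_right.comp tendsto_inv_atTop_nhdsGT_zero).congr fun t => ?_
  simp

theorem tendsto_mul_one_sub_div_rpow_sub_one (p v : ℝ) :
    Tendsto (fun t => t * ((1 - v / t) ^ p - 1)) atTop (𝓝 (-(v * p))) := by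
  have hderiv : HasDerivAt (fun s => (1 - v * s) ^ p) (-(v * p)) 0 := by
    simpa using (((hasDerivAt_id (0 : ℝ)).const_mul v).const_sub 1).rpow_const
      (p := p) (Or.inl (by simp))
  simpa [div_eq_mul_inv] using hderiv.tendsto_smul_sub_inv_atTop

theorem tendsto_sub_mul_one_sub_div_rpow_sub_one (p u v : ℝ) :
    Tendsto (fun t => (t - u) * ((1 - v / t) ^ p - 1)) atTop (𝓝 (-(v * p))) := by
  have hratio : Tendsto (fun t : ℝ => 1 - u / t) atTop (𝓝 1) := by
    simpa using tendsto_const_nhds.sub ((tendsto_const_nhds (x := u)).div_atTop tendsto_id)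
  have hprod := hratio.mul (tendsto_mul_one_sub_div_rpow_sub_one p v)
  rw [one_mul] at hprod
  refine hprod.congr' ?_
  filter_upwards [eventually_ne_atTop 0] with t ht
  field_simp

theorem maxC_eq_min_mul_rpow (m : ℕ) (a : ℝ) {b : ℝ} (hb : 0 < b) :
    maxC m a b = min (a * b ^ (1 - (1 : ℝ) / m)) b := by
  rw [maxC, min_mul_of_nonneg _ _ (Real.rpow_nonneg hb.le _), ← Real.rpow_add hb]
  simp

theorem mul_survCopula_maxC_div (m : ℕ) (u : ℝ) {v t : ℝ} (ht : 0 < t) (hvt : v < t) :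
    t * survCopula (maxC m) (u / t) (v / t) =
      min (v + (t - u) * ((1 - v / t) ^ (1 - (1 : ℝ) / m) - 1)) u := by
  have hb : 0 < 1 - v / t := sub_pos.2 ((div_lt_one ht).2 hvt)
  rw [survCopula, maxC_eq_min_mul_rpow m _ hb, mul_add, mul_min_of_nonneg _ _ ht.le,
    ← min_add_add_left]
  congr 1 <;> field_simp <;> ring

theorem tendsto_mul_survCopula_maxC_div (m : ℕ) (u v : ℝ) :
    Tendsto (fun t => t * survCopula (maxC m) (u / t) (v / t)) atTop (𝓝 (min u (v / m))) := by
  have hlim := (tendsto_const_nhds (x := v)).add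
    (tendsto_sub_mul_one_sub_div_rpow_sub_one (1 - (1 : ℝ) / m) u v)
  rw [show v + -(v * (1 - 1 / m)) = v / m by ring] at hlim
  rw [min_comm]
  refine (hlim.min tendsto_const_nhds).congr' ?_
  filter_upwards [eventually_gt_atTop 0, eventually_gt_atTop v] with t ht hvt
  exact (mul_survCopula_maxC_div m u ht hvt).symm

theorem integral_min_id_const_sq {c : ℝ} (hc0 : 0 ≤ c) (hc1 : c ≤ 1) :
    ∫ u in (0 : ℝ)..1, (min u c) ^ 2 = c ^ 3 / 3 + (1 - c) * c ^ 2 := by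
  have hint : Continuous fun u : ℝ => (min u c) ^ 2 := by fun_prop
  rw [← intervalIntegral.integral_add_adjacent_intervals (b := c)
      (hint.intervalIntegrable _ _) (hint.intervalIntegrable _ _)]
  have hlow : ∫ u in (0 : ℝ)..c, (min u c) ^ 2 = ∫ u in (0 : ℝ)..c, u ^ 2 :=
    intervalIntegral.integral_congr fun u hu => by
      rw [uIcc_of_le hc0] at hu
      rw [min_eq_left hu.2]
  have hhigh : ∫ u in c..1, (min u c) ^ 2 = ∫ _ in c..1, c ^ 2 :=
    intervalIntegral.integral_congr fun u hu => by
      rw [uIcc_of_le hc1] at hu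
      rw [min_eq_right hu.1]
  rw [hlow, hhigh, integral_pow, intervalIntegral.integral_const, smul_eq_mul]
  ring

theorem integral_min_one_mul_sq {c : ℝ} (hc : c ≤ 1) :
    ∫ v in (0 : ℝ)..1, (min 1 (v * c)) ^ 2 = c ^ 2 / 3 := by
  have hmin : ∫ v in (0 : ℝ)..1, (min 1 (v * c)) ^ 2 = ∫ v in (0 : ℝ)..1, c ^ 2 * v ^ 2 :=
    intervalIntegral.integral_congr fun v hv => by
      rw [uIcc_of_le zero_le_one] at hv
      rw [min_eq_right (by nlinarith [mul_nonneg hv.1 (sub_nonneg.2 hc), hv.2])]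
      ring
  rw [hmin, intervalIntegral.integral_const_mul, integral_pow]
  ring

theorem maxModel_tailCopula_eta_general (m : ℕ) :
    (∀ u ∈ Icc (0 : ℝ) 1, ∀ v ∈ Icc (0 : ℝ) 1,
      Tendsto (fun t : ℝ => t * survCopula (maxC m) (u / t) (v / t)) atTop
        (nhds (min u (v / m)))) ∧
    (3 * ∫ u in (0:ℝ)..1, (min u (1 / (m : ℝ))) ^ 2 = 3 / (m : ℝ) ^ 2 - 2 / (m : ℝ) ^ 3) ∧
    (3 * ∫ v in (0:ℝ)..1, (min 1 (v / (m : ℝ))) ^ 2 = 1 / (m : ℝ) ^ 2) ∧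
    ((3 * ∫ u in (0:ℝ)..1, (min u (1 / (m : ℝ))) ^ 2) -
        (3 * ∫ v in (0:ℝ)..1, (min 1 (v / (m : ℝ))) ^ 2) =
      2 / (m : ℝ) ^ 2 * (1 - 1 / (m : ℝ))) := by
  have hinv_le_one : (m : ℝ)⁻¹ ≤ 1 := Nat.cast_inv_le_one m
  have hetaXY : 3 * ∫ u in (0:ℝ)..1, (min u (1 / (m : ℝ))) ^ 2 =
      3 / (m : ℝ) ^ 2 - 2 / (m : ℝ) ^ 3 := by
    rw [integral_min_id_const_sq (by positivity) (by rwa [one_div])]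
    ring
  have hetaYX : 3 * ∫ v in (0:ℝ)..1, (min 1 (v / (m : ℝ))) ^ 2 = 1 / (m : ℝ) ^ 2 := by
    simp only [div_eq_mul_inv, integral_min_one_mul_sq hinv_le_one]
    ring
  exact ⟨fun u _ v _ => tendsto_mul_survCopula_maxC_div m u v, hetaXY, hetaYX,
    by rw [hetaXY, hetaYX]; ring⟩

/-- **Tail copula and ETA measures for the max-model copula.**
For an integer `m ≥ 2`: `lim_{t→∞} t·C̄_m(u/t, v/t) = min(u, v/m)` for all
`(u,v) ∈ [0,1]²`, so the tail copula is `Λ_m(u,v) = min(u, v/m)`, and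
`η(X|Y) = 3∫₀¹ min(u,1/m)² du = 3/m² − 2/m³`, `η(Y|X) = 3∫₀¹ min(1,v/m)² dv = 1/m²`,
and `Δ(X,Y) = η(X|Y) − η(Y|X) = (2/m²)(1 − 1/m)`. -/
theorem maxModel_tailCopula_eta (m : ℕ) (hm : 2 ≤ m) :
    (∀ u ∈ Icc (0 : ℝ) 1, ∀ v ∈ Icc (0 : ℝ) 1,
      Tendsto (fun t : ℝ => t * survCopula (maxC m) (u / t) (v / t)) atTop
        (nhds (min u (v / m)))) ∧
    (3 * ∫ u in (0:ℝ)..1, (min u (1 / (m : ℝ))) ^ 2 = 3 / (m : ℝ) ^ 2 - 2 / (m : ℝ) ^ 3) ∧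
    (3 * ∫ v in (0:ℝ)..1, (min 1 (v / (m : ℝ))) ^ 2 = 1 / (m : ℝ) ^ 2) ∧
    ((3 * ∫ u in (0:ℝ)..1, (min u (1 / (m : ℝ))) ^ 2) -
        (3 * ∫ v in (0:ℝ)..1, (min 1 (v / (m : ℝ))) ^ 2) =
      2 / (m : ℝ) ^ 2 * (1 - 1 / (m : ℝ))) :=
  maxModel_tailCopula_eta_general m
end
end

section
/- Let m ≥ 2 be an integer and let Z_1, …, Z_m be independent, identically distributed real-valued random variables with common cumulative distribution function F. Set X := Z_1 and Y := max(Z_1, …, Z_m). Then for all x, y ∈ ℝ, P(X ≤ x, Y ≤ y) = min( F(x), F(y) ) · F(y)^{m−1}; in particular, writing u = F(x) and v = F(y)^m, the joint distribution of (X,Y) has copula C_m(u,v) = min(u, v^{1/m}) v^{1−1/m}. -/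
open MeasureTheory ProbabilityTheory Filter Set

noncomputable section

/-!
The event `{Z₁ ≤ x, max Zᵢ ≤ y}` is the box `{Z₁ ≤ min x y} ∩ ⋂_{i ≠ 1} {Zᵢ ≤ y}`, so by
independence its probability is `F(min x y) · F(y)^(m-1)`, and `F(min x y) = min (F x) (F y)`
because `F` is monotone.
-/

theorem Finset.le_and_sup'_le_iff_forall_le_update {ι α : Type*} [Fintype ι] [DecidableEq ι]
    [LinearOrder α] (H : (Finset.univ : Finset ι).Nonempty) (f : ι → α) (i₀ : ι) (x y : α) :
    f i₀ ≤ x ∧ Finset.univ.sup' H f ≤ y ↔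
      ∀ i, f i ≤ Function.update (fun _ => y) i₀ (min x y) i := by
  rw [Function.forall_update_iff _ (p := fun i c => f i ≤ c), Finset.sup'_le_iff, le_min_iff]
  constructor
  · exact fun ⟨hx, hy⟩ => ⟨⟨hx, hy i₀ (Finset.mem_univ _)⟩, fun i _ => hy i (Finset.mem_univ _)⟩
  · rintro ⟨⟨hx, hy₀⟩, hy⟩
    exact ⟨hx, fun i _ => (eq_or_ne i i₀).elim (· ▸ hy₀) (hy i)⟩

theorem Fintype.prod_apply_update_const {ι β M : Type*} [Fintype ι] [DecidableEq ι]
    [CommMonoid M] (g : β → M) (i₀ : ι) (a b : β) :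
    ∏ i, g (Function.update (fun _ => b) i₀ a i) = g a * g b ^ (Fintype.card ι - 1) := by
  simp_rw [Function.apply_update (fun _ => g), Finset.prod_update_of_mem (Finset.mem_univ i₀),
    Finset.prod_const, Finset.card_sdiff_of_subset (Finset.subset_univ _), Finset.card_univ,
    Finset.card_singleton]

theorem ProbabilityTheory.iIndepFun.measure_iInter_preimage_eq_prod {Ω ι β : Type*}
    [MeasurableSpace Ω] [MeasurableSpace β] [Fintype ι] {P : Measure Ω} {Z : ι → Ω → β}
    {ν : Measure β} [NeZero ν] (hindep : iIndepFun Z P) (hdist : ∀ i, P.map (Z i) = ν)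
    {s : ι → Set β} (hs : ∀ i, MeasurableSet (s i)) :
    P (⋂ i, Z i ⁻¹' s i) = ∏ i, ν (s i) := by
  rw [hindep.meas_iInter fun i => ⟨s i, hs i, rfl⟩]
  refine Finset.prod_congr rfl fun i _ => ?_
  have hZ : AEMeasurable (Z i) P := .of_map_ne_zero (by rw [hdist i]; exact NeZero.ne ν)
  rw [← hdist i, Measure.map_apply_of_aemeasurable hZ (hs i)]

/-- **Joint distribution of `(Z_1, max(Z_1,…,Z_m))` for i.i.d. `Z_i`.**
If `Z_1,…,Z_m` are i.i.d. with CDF `F`, `X = Z_1` and `Y = max(Z_1,…,Z_m)`, then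
`P(X ≤ x, Y ≤ y) = min(F(x), F(y))·F(y)^{m−1}` for all `x, y ∈ ℝ`. -/
theorem maxModel_joint_cdf
    {Ω : Type*} [MeasurableSpace Ω] (P : Measure Ω)
    (m : ℕ) (hm : 2 ≤ m) (Z : Fin m → Ω → ℝ)
    (ν : Measure ℝ) [IsProbabilityMeasure ν]
    (hdist : ∀ i, Measure.map (Z i) P = ν)
    (hindep : iIndepFun Z P) :
    ∀ x y : ℝ,
      (P {ω | Z ⟨0, by omega⟩ ω ≤ x ∧
          Finset.univ.sup' ⟨⟨0, by omega⟩, Finset.mem_univ _⟩ (fun i => Z i ω) ≤ y}).toReal =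
        min ((ν (Iic x)).toReal) ((ν (Iic y)).toReal) * ((ν (Iic y)).toReal) ^ (m - 1) := by
  intro x y
  set i₀ : Fin m := ⟨0, by omega⟩
  have hbox : {ω | Z i₀ ω ≤ x ∧
      Finset.univ.sup' ⟨i₀, Finset.mem_univ _⟩ (fun i => Z i ω) ≤ y} =
      ⋂ i, Z i ⁻¹' Iic (Function.update (fun _ => y) i₀ (min x y) i) := by
    ext ω
    simpa using Finset.le_and_sup'_le_iff_forall_le_update _ (fun i => Z i ω) i₀ x y
  have hcdf (t : ℝ) : (ν (Iic t)).toReal = cdf ν t := (cdf_eq_real ν t).symm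
  rw [hbox, hindep.measure_iInter_preimage_eq_prod hdist fun _ => measurableSet_Iic,
    Fintype.prod_apply_update_const (fun t => ν (Iic t)), Fintype.card_fin, ENNReal.toReal_mul,
    ENNReal.toReal_pow]
  simp only [hcdf, (cdf ν).mono.map_min]
end
end

section
/- Let Λ : [0,1]² → ℝ be bounded and measurable, let (t_m) be a sequence of nonzero real numbers with t_m → 0, let h : [0,1]² → ℝ be continuous, and let (h_m) be a sequence of measurable functions on [0,1]² with sup_{(u,v)∈[0,1]²} |h_m(u,v) − h(u,v)| → 0 as m → ∞. Define ψ(f) := 3∫₀¹ f(u,1)² du − 3∫₀¹ f(1,v)² dv. Then ( ψ(Λ + t_m h_m) − ψ(Λ) ) / t_m → 6 ∫₀¹ [ Λ(u,1) h(u,1) − Λ(1,u) h(1,u) ] du as m → ∞. (This identifies the Hadamard derivative of the asymmetry functional ψ at Λ, tangentially to the continuous functions.) -/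
open Filter Set MeasureTheory

noncomputable section

/-!
Expanding the square, the difference quotient of `f ↦ ∫ f²` at `f` in direction `g` with step
`s` is `∫ (2 f g + s g²)`. Uniform convergence `g_m → k` to a bounded `k` makes the `g_m`
eventually uniformly bounded, so dominated convergence sends these integrals to `2 ∫ f k`.
`ψ` is a combination of two such functionals, along the edges `v = 1` and `u = 1` of the square.
-/

/-- The asymmetry functional `ψ(f) = 3∫₀¹ f(u,1)² du − 3∫₀¹ f(1,v)² dv`. -/
def psiF (f : ℝ × ℝ → ℝ) : ℝ :=
  (3 * ∫ u in (0:ℝ)..1, (f (u, 1)) ^ 2) - 3 * ∫ v in (0:ℝ)..1, (f (1, v)) ^ 2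

section DifferenceQuotient

variable {α ι : Type*} {l : Filter ι} {f k : α → ℝ} {g : ι → α → ℝ} {s : ι → ℝ} {S : Set α}
  {M C : ℝ}

lemma TendstoUniformlyOn.eventually_abs_le (hgk : TendstoUniformlyOn g k l S)
    (hkC : ∀ x ∈ S, |k x| ≤ C) : ∀ᶠ i in l, ∀ x ∈ S, |g i x| ≤ C + 1 := by
  filter_upwards [Metric.tendstoUniformlyOn_iff.1 hgk 1 one_pos] with i hi x hx
  have hdist : |k x - g i x| < 1 := hi x hx
  have := abs_sub_abs_le_abs_sub (g i x) (k x)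
  rw [abs_sub_comm] at this
  linarith [hkC x hx]

variable [MeasurableSpace α] {μ : Measure α} [IsFiniteMeasure μ]

lemma integrable_mul_of_tendstoUniformlyOn [l.NeBot] [l.IsCountablyGenerated]
    (hf : AEStronglyMeasurable f μ) (hfM : ∀ᵐ x ∂μ, |f x| ≤ M)
    (hg : ∀ i, AEStronglyMeasurable (g i) μ) (hS : ∀ᵐ x ∂μ, x ∈ S)
    (hkC : ∀ x ∈ S, |k x| ≤ C) (hgk : TendstoUniformlyOn g k l S) :
    Integrable (fun x => f x * k x) μ := by
  have hk : AEStronglyMeasurable k μ :=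
    aestronglyMeasurable_of_tendsto_ae l hg (hS.mono fun x hx => hgk.tendsto_at hx)
  exact (MemLp.of_bound (p := 2) hf M hfM).integrable_mul
    (MemLp.of_bound (p := 2) hk C (hS.mono hkC))

theorem tendsto_integral_sq_add_mul_sub_div [l.IsCountablyGenerated]
    (hf : AEStronglyMeasurable f μ) (hfM : ∀ᵐ x ∂μ, |f x| ≤ M)
    (hg : ∀ i, AEStronglyMeasurable (g i) μ) (hS : ∀ᵐ x ∂μ, x ∈ S)
    (hkC : ∀ x ∈ S, |k x| ≤ C) (hgk : TendstoUniformlyOn g k l S)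
    (hs : Tendsto s l (nhds 0)) (hs0 : ∀ᶠ i in l, s i ≠ 0) :
    Tendsto (fun i => ((∫ x, (f x + s i * g i x) ^ 2 ∂μ) - ∫ x, f x ^ 2 ∂μ) / s i) l
      (nhds (2 * ∫ x, f x * k x ∂μ)) := by
  have hgC := hgk.eventually_abs_le hkC
  have hs1 : ∀ᶠ i in l, |s i| ≤ 1 := by
    simpa only [Real.dist_eq, sub_zero] using hs.eventually (Metric.closedBall_mem_nhds 0 one_pos)
  have hfL : MemLp f 2 μ := MemLp.of_bound hf M hfM
  have hquot : ∀ᶠ i in l, ((∫ x, (f x + s i * g i x) ^ 2 ∂μ) - ∫ x, f x ^ 2 ∂μ) / s i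
      = ∫ x, (2 * f x * g i x + s i * g i x ^ 2) ∂μ := by
    filter_upwards [hgC, hs0] with i hiC hi0
    have hgL : MemLp (g i) 2 μ :=
      MemLp.of_bound (hg i) (C + 1) (hS.mono hiC)
    have hint : Integrable (fun x => (f x + s i * g i x) ^ 2) μ :=
      (hfL.add (hgL.const_mul (s i))).integrable_sq
    rw [← integral_sub hint hfL.integrable_sq, div_eq_iff hi0, ← integral_mul_const]
    exact integral_congr_ae (ae_of_all _ fun x => by ring)
  rw [show 2 * ∫ x, f x * k x ∂μ = ∫ x, 2 * f x * k x + 0 * k x ^ 2 ∂μ by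
    rw [← integral_const_mul]; congr 1; ext x; ring]
  refine Tendsto.congr' (EventuallyEq.symm hquot) ?_
  refine tendsto_integral_filter_of_dominated_convergence (fun _ => 2 * M * (C + 1) + (C + 1) ^ 2)
    (Eventually.of_forall fun i => by have := hg i; fun_prop) ?_ (integrable_const _) ?_
  · filter_upwards [hgC, hs1] with i hiC hi1
    filter_upwards [hfM, hS] with x hxM hxS
    have hgxC := hiC x hxS
    rw [Real.norm_eq_abs]
    calc |2 * f x * g i x + s i * g i x ^ 2| ≤ |2 * f x * g i x| + |s i * g i x ^ 2| :=
          abs_add_le _ _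
      _ = 2 * |f x| * |g i x| + |s i| * |g i x| ^ 2 := by
          rw [abs_mul, abs_mul, abs_mul, abs_two, abs_pow]
      _ ≤ 2 * M * (C + 1) + 1 * (C + 1) ^ 2 := by gcongr; linarith [abs_nonneg (f x)]
      _ = _ := by ring
  · filter_upwards [hS] with x hx
    have hgx := hgk.tendsto_at hx
    exact (hgx.const_mul (2 * f x)).add (hs.mul (hgx.pow 2))

end DifferenceQuotient

section Slice

variable {X : Type*} [MeasurableSpace X] {Λ h : X → ℝ} {hs : ℕ → X → ℝ} {t : ℕ → ℝ}
  {K : Set X} {e : ℝ → X} {M C : ℝ}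

lemma intervalIntegrable_comp_mul_of_tendstoUniformlyOn (hΛ : Measurable Λ)
    (hΛM : ∀ p, |Λ p| ≤ M) (hsm : ∀ m, Measurable (hs m)) (hC : ∀ p ∈ K, |h p| ≤ C)
    (hunif : TendstoUniformlyOn hs h atTop K) (he : Measurable e) (heK : MapsTo e (Ioc 0 1) K) :
    IntervalIntegrable (fun u => Λ (e u) * h (e u)) volume 0 1 := by
  rw [intervalIntegrable_iff_integrableOn_Ioc_of_le zero_le_one]
  exact integrable_mul_of_tendstoUniformlyOn (hΛ.comp he).aestronglyMeasurable
    (ae_of_all _ fun u => hΛM (e u)) (fun m => ((hsm m).comp he).aestronglyMeasurable)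
    ((ae_restrict_mem measurableSet_Ioc).mono heK) (fun u hu => hC (e u) hu) (hunif.comp e)

lemma tendsto_intervalIntegral_comp_sq_add_mul_sub_div (hΛ : Measurable Λ)
    (hΛM : ∀ p, |Λ p| ≤ M) (hsm : ∀ m, Measurable (hs m)) (hC : ∀ p ∈ K, |h p| ≤ C)
    (hunif : TendstoUniformlyOn hs h atTop K) (he : Measurable e) (heK : MapsTo e (Ioc 0 1) K)
    (ht : Tendsto t atTop (nhds 0)) (ht0 : ∀ᶠ m in atTop, t m ≠ 0) :
    Tendsto (fun m => ((∫ u in (0:ℝ)..1, (Λ (e u) + t m * hs m (e u)) ^ 2)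
        - ∫ u in (0:ℝ)..1, Λ (e u) ^ 2) / t m) atTop
      (nhds (2 * ∫ u in (0:ℝ)..1, Λ (e u) * h (e u))) := by
  simp only [intervalIntegral.integral_of_le zero_le_one]
  exact tendsto_integral_sq_add_mul_sub_div (hΛ.comp he).aestronglyMeasurable
    (ae_of_all _ fun u => hΛM (e u)) (fun m => ((hsm m).comp he).aestronglyMeasurable)
    ((ae_restrict_mem measurableSet_Ioc).mono heK) (fun u hu => hC (e u) hu) (hunif.comp e)
    ht ht0

end Slice

/-- **Hadamard differentiability of the asymmetry functional `ψ`.**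
If `Λ` is bounded and measurable on `[0,1]²`, `t_m ≠ 0` with `t_m → 0`, `h` is continuous
on `[0,1]²`, and `h_m` are measurable with `h_m → h` uniformly on `[0,1]²`, then
`(ψ(Λ + t_m h_m) − ψ(Λ))/t_m → 6∫₀¹ [Λ(u,1)h(u,1) − Λ(1,u)h(1,u)] du`. -/
theorem hadamard_derivative_psi (Λ : ℝ × ℝ → ℝ) (hΛmeas : Measurable Λ)
    (M : ℝ) (hΛbd : ∀ p, |Λ p| ≤ M)
    (t : ℕ → ℝ) (ht0 : ∀ m, t m ≠ 0) (ht : Tendsto t atTop (nhds 0))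
    (h : ℝ × ℝ → ℝ) (hcont : ContinuousOn h (Icc (0 : ℝ) 1 ×ˢ Icc (0 : ℝ) 1))
    (hs : ℕ → ℝ × ℝ → ℝ) (hsmeas : ∀ m, Measurable (hs m))
    (hunif : TendstoUniformlyOn hs h atTop (Icc (0 : ℝ) 1 ×ˢ Icc (0 : ℝ) 1)) :
    Tendsto
      (fun m => (psiF (fun p => Λ p + t m * hs m p) - psiF Λ) / t m)
      atTop
      (nhds (6 * ∫ u in (0:ℝ)..1, (Λ (u, 1) * h (u, 1) - Λ (1, u) * h (1, u)))) := by
  obtain ⟨C, hC⟩ := (isCompact_Icc.prod isCompact_Icc).exists_bound_of_continuousOn hcont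
  have htop : MapsTo (fun u : ℝ => (u, (1:ℝ))) (Ioc 0 1) (Icc 0 1 ×ˢ Icc 0 1) :=
    fun u hu => ⟨Ioc_subset_Icc_self hu, right_mem_Icc.2 zero_le_one⟩
  have hright : MapsTo (fun v : ℝ => ((1:ℝ), v)) (Ioc 0 1) (Icc 0 1 ×ˢ Icc 0 1) :=
    fun v hv => ⟨right_mem_Icc.2 zero_le_one, Ioc_subset_Icc_self hv⟩
  rw [intervalIntegral.integral_sub
    (intervalIntegrable_comp_mul_of_tendstoUniformlyOn hΛmeas hΛbd hsmeas hC hunif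
      (by fun_prop) htop)
    (intervalIntegrable_comp_mul_of_tendstoUniformlyOn hΛmeas hΛbd hsmeas hC hunif
      (by fun_prop) hright)]
  have hslice := fun {e : ℝ → ℝ × ℝ} (he : Measurable e) heK =>
    tendsto_intervalIntegral_comp_sq_add_mul_sub_div hΛmeas hΛbd hsmeas hC hunif he heK ht
      (Eventually.of_forall ht0)
  convert ((hslice (by fun_prop) htop).const_mul 3).sub
    ((hslice (by fun_prop) hright).const_mul 3) using 2 with m
  · simp only [psiF]
    ring
  · ring
end
end
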